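/- arXiv:2111.11780 — 6 statements merged into one kernel-verified Lean document; each statement's English description precedes it below -/
import Mathlib

section
/- Let X be a real-valued random variable with characteristic function φ(t) = E[e^{itX}]. Then for every t ∈ ℝ, 4·H(X, t/(2π)) ≤ 1 − |φ(t)| ≤ 2π²·H(X, t/(2π)). -/
open MeasureTheory

/-- Distance from a real number to the nearest integer. -/
noncomputable def distNearestInt (α : ℝ) : ℝ := |α - round α|

/-- `H(X,d) = E⟨X* d⟩²` where `X* = X - X'` is the symmetrisation of `X`; expressed via
the law `ν` of `X` as a double integral. -/
noncomputable def Hsym (ν : Measure ℝ) (d : ℝ) : ℝ :=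
  ∫ x, ∫ y, distNearestInt ((x - y) * d) ^ 2 ∂ν ∂ν

/-!
Let `φ` be the characteristic function of the law `ν` of `X`. Then
`|φ(t)|² = ∫∫ cos (t (x - y)) dν dν` is the characteristic function of `X*` at `t`.
Reducing `α` modulo `ℤ`, `1 - cos (2πα)` lies between `8⟨α⟩²` (Jordan's inequality) and
`2π²⟨α⟩²` (`cos x ≥ 1 - x²/2`), so integrating gives `8 H ≤ 1 - |φ|² ≤ 2π² H`.
Since `0 ≤ |φ| ≤ 1`, `1 - |φ|` lies between `(1 - |φ|²) / 2` and `1 - |φ|²`.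
-/

open Real ComplexConjugate

@[fun_prop]
theorem measurable_distNearestInt : Measurable distNearestInt := by
  unfold distNearestInt
  simp only [round_eq]
  fun_prop

theorem sq_distNearestInt_le (α : ℝ) : distNearestInt α ^ 2 ≤ 1 / 4 :=
  calc distNearestInt α ^ 2
    _ ≤ (1 / 2) ^ 2 := pow_le_pow_left₀ (abs_nonneg _) (abs_sub_round α) 2
    _ = 1 / 4 := by norm_num

theorem cos_two_pi_mul_sub_round (α : ℝ) :
    cos (2 * π * (α - round α)) = cos (2 * π * α) := by
  rw [← cos_sub_int_mul_two_pi (2 * π * α) (round α)]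
  ring_nf

theorem eight_mul_sq_distNearestInt_le_one_sub_cos (α : ℝ) :
    8 * distNearestInt α ^ 2 ≤ 1 - cos (2 * π * α) := by
  have hβ : |2 * π * (α - round α)| ≤ π := by
    rw [abs_mul, abs_of_pos two_pi_pos]
    nlinarith [abs_sub_round α, pi_pos]
  have hcos := cos_le_one_sub_mul_cos_sq hβ
  have hconst : 2 / π ^ 2 * (2 * π * (α - round α)) ^ 2 = 8 * (α - round α) ^ 2 := by
    field_simp
    ring
  rw [cos_two_pi_mul_sub_round, hconst] at hcos
  rw [distNearestInt, sq_abs]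
  linarith

theorem one_sub_cos_le_two_mul_pi_sq_mul_sq_distNearestInt (α : ℝ) :
    1 - cos (2 * π * α) ≤ 2 * π ^ 2 * distNearestInt α ^ 2 := by
  have h := one_sub_sq_div_two_le_cos (x := 2 * π * (α - round α))
  rw [cos_two_pi_mul_sub_round] at h
  rw [distNearestInt, sq_abs]
  linarith

theorem two_pi_mul_mul_div_two_pi (x t : ℝ) : 2 * π * (x * (t / (2 * π))) = t * x := by
  field_simp

section

variable (ν : Measure ℝ) [IsFiniteMeasure ν]

theorem sq_norm_charFun_eq_integral_cos (t : ℝ) :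
    ‖charFun ν t‖ ^ 2 = ∫ z, cos (t * (z.1 - z.2)) ∂(ν.prod ν) := by
  have hint : Integrable (fun z : ℝ × ℝ ↦ Complex.exp (↑(t * (z.1 - z.2)) * Complex.I))
      (ν.prod ν) :=
    (integrable_const (1 : ℝ)).mono (by fun_prop) (by simp [Complex.norm_exp])
  have hprod : charFun ν t * conj (charFun ν t) =
      ∫ z, Complex.exp (↑(t * (z.1 - z.2)) * Complex.I) ∂(ν.prod ν) := by
    rw [← charFun_neg, charFun_apply_real, charFun_apply_real, ← integral_prod_mul]
    congr with z
    rw [← Complex.exp_add]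
    push_cast
    ring_nf
  rw [Complex.sq_norm, ← Complex.ofReal_re (Complex.normSq _), ← Complex.mul_conj, hprod,
    ← RCLike.re_to_complex, ← integral_re hint]
  simp only [RCLike.re_to_complex, Complex.exp_ofReal_mul_I_re]

theorem integrable_sq_distNearestInt_sub_mul (d : ℝ) :
    Integrable (fun z : ℝ × ℝ ↦ distNearestInt ((z.1 - z.2) * d) ^ 2) (ν.prod ν) :=
  .of_bound (Measurable.aestronglyMeasurable (by fun_prop)) (1 / 4) <| .of_forall fun z ↦ by
    simpa using sq_distNearestInt_le ((z.1 - z.2) * d)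

theorem integrable_cos_mul_sub (c : ℝ) :
    Integrable (fun z : ℝ × ℝ ↦ cos (c * (z.1 - z.2))) (ν.prod ν) :=
  .of_bound (by fun_prop) 1 <| .of_forall fun z ↦ by simpa using abs_cos_le_one _

theorem Hsym_eq_integral_prod (d : ℝ) :
    Hsym ν d = ∫ z, distNearestInt ((z.1 - z.2) * d) ^ 2 ∂(ν.prod ν) :=
  (integral_prod _ (integrable_sq_distNearestInt_sub_mul ν d)).symm

end

section

variable (ν : Measure ℝ) [IsProbabilityMeasure ν] (t : ℝ)

theorem one_sub_sq_norm_charFun_eq_integral :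
    1 - ‖charFun ν t‖ ^ 2 = ∫ z, (1 - cos (t * (z.1 - z.2))) ∂(ν.prod ν) := by
  rw [sq_norm_charFun_eq_integral_cos, integral_sub (integrable_const 1)
    (integrable_cos_mul_sub ν t), integral_const, probReal_univ, one_smul]

theorem eight_mul_Hsym_le_one_sub_sq_norm_charFun :
    8 * Hsym ν (t / (2 * π)) ≤ 1 - ‖charFun ν t‖ ^ 2 := by
  rw [Hsym_eq_integral_prod, one_sub_sq_norm_charFun_eq_integral, ← integral_const_mul]
  refine integral_mono ((integrable_sq_distNearestInt_sub_mul ν _).const_mul 8)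
    ((integrable_const 1).sub (integrable_cos_mul_sub ν t)) fun z ↦ ?_
  simpa [two_pi_mul_mul_div_two_pi] using
    eight_mul_sq_distNearestInt_le_one_sub_cos ((z.1 - z.2) * (t / (2 * π)))

theorem one_sub_sq_norm_charFun_le_two_mul_pi_sq_mul_Hsym :
    1 - ‖charFun ν t‖ ^ 2 ≤ 2 * π ^ 2 * Hsym ν (t / (2 * π)) := by
  rw [Hsym_eq_integral_prod, one_sub_sq_norm_charFun_eq_integral, ← integral_const_mul]
  refine integral_mono ((integrable_const 1).sub (integrable_cos_mul_sub ν t))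
    ((integrable_sq_distNearestInt_sub_mul ν _).const_mul _) fun z ↦ ?_
  simpa [two_pi_mul_mul_div_two_pi] using
    one_sub_cos_le_two_mul_pi_sq_mul_sq_distNearestInt ((z.1 - z.2) * (t / (2 * π)))

end

/-- Mukhin's bound: if `φ` is the characteristic function of `X`, then
`4 H(X, t/(2π)) ≤ 1 - |φ(t)| ≤ 2π² H(X, t/(2π))`. -/
theorem char_fun_bounds_via_Hsym
    {Ω : Type*} [MeasurableSpace Ω] {μ : Measure Ω} [IsProbabilityMeasure μ]
    (X : Ω → ℝ) (hX : Measurable X) (t : ℝ) :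
    4 * Hsym (μ.map X) (t / (2 * Real.pi)) ≤
        1 - ‖∫ ω, Complex.exp (Complex.I * (t * X ω)) ∂μ‖ ∧
      1 - ‖∫ ω, Complex.exp (Complex.I * (t * X ω)) ∂μ‖ ≤
        2 * Real.pi ^ 2 * Hsym (μ.map X) (t / (2 * Real.pi)) := by
  have := Measure.isProbabilityMeasure_map (μ := μ) hX.aemeasurable
  have hφ : ∫ ω, Complex.exp (Complex.I * (t * X ω)) ∂μ = charFun (μ.map X) t := by
    rw [charFun_apply_real, integral_map hX.aemeasurable (by fun_prop)]
    simp only [mul_comm Complex.I]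
  have hlow := eight_mul_Hsym_le_one_sub_sq_norm_charFun (μ.map X) t
  have hup := one_sub_sq_norm_charFun_le_two_mul_pi_sq_mul_Hsym (μ.map X) t
  have hle := norm_charFun_le_one (μ := μ.map X) t
  have hnn := norm_nonneg (charFun (μ.map X) t)
  rw [hφ]
  constructor <;> nlinarith
end

section
/- Let X be an integer-valued random variable whose distribution has exactly k ≥ 3 distinct atoms x₁, …, x_k, all lying in a lattice of step h (a positive integer), and such that the atoms are not all contained in a non-trivial arithmetic progression of that lattice (equivalently, the greatest common divisor of the pairwise differences |x_i − x_j| equals h). Define w(x) = max over indices i, j, ℓ with i ≠ ℓ and j ≠ ℓ of |x_i − x_ℓ| / gcd(|x_i − x_ℓ|, |x_j − x_ℓ|). Then there is an absolute constant C > 0 (one may take C = 1/16) such that H_h(X) ≥ C · (min_{i∈[k]} P(X = x_i)) / ( k · (w(x)·h)² ). -/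
open MeasureTheory

/-- `H_D(X) = inf_{1/(4D) ≤ d ≤ 1/(2D)} H(X,d)`. -/
noncomputable def HsymD (ν : Measure ℝ) (D : ℕ) : ℝ :=
  sInf (Hsym ν '' Set.Icc (1 / (4 * (D : ℝ))) (1 / (2 * (D : ℝ))))

/-- `w(x) = max_{i ≠ ℓ, j ≠ ℓ} |x_i - x_ℓ| / gcd(|x_i - x_ℓ|, |x_j - x_ℓ|)`. -/
def wParam {k : ℕ} (x : Fin k → ℤ) : ℕ :=
  (Finset.univ.filter
      (fun t : Fin k × Fin k × Fin k => t.1 ≠ t.2.2 ∧ t.2.1 ≠ t.2.2)).sup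
    (fun t => (x t.1 - x t.2.2).natAbs /
      Nat.gcd (x t.1 - x t.2.2).natAbs ((x t.2.1 - x t.2.2).natAbs))

/-!
On its atoms `X` gives `H(X, d) = ∑ᵢⱼ pᵢ pⱼ ⟨(xᵢ - xⱼ) d⟩²`. Fix an atom `x_ℓ` of mass at least
`1/k`; it suffices to find, for every `d` with `h d ∈ [1/4, 1/2]`, some `j` with
`⟨(x_j - x_ℓ) d⟩ ≥ 1/(4w)`. Put `B_j = x_j - x_ℓ`, let `n_j` be the integer nearest to `B_j d`,
and suppose `|B_j d - n_j| < 1/(4w)` for all `j ≠ ℓ`.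
If `n_i B_j ≠ n_j B_i` for some `i, j`, this nonzero integer is a multiple of `gcd(B_i, B_j)`,
yet it is less than `(|B_i| + |B_j|)/(4w) ≤ gcd(B_i, B_j)/2`.
Otherwise all `n_j / B_j` are one fraction `u/v` in lowest terms; then `v` divides every `B_j`,
hence `h`, so `h n_j / B_j = m` is an integer and `|B_j d - n_j| = |B_j|/h · |h d - m| ≥ 1/4`.
-/

open Finset Function

lemma quarter_le_abs_mul_sub_intCast {h d : ℝ} (hh : 0 < h)
    (hd : d ∈ Set.Icc (1 / (4 * h)) (1 / (2 * h))) (m : ℤ) : 1 / 4 ≤ |h * d - m| := by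
  obtain ⟨h₁, h₂⟩ := hd
  rw [div_le_iff₀ (by positivity)] at h₁
  rw [le_div_iff₀ (by positivity)] at h₂
  rcases le_or_gt m 0 with hm | hm
  · have : (m : ℝ) ≤ 0 := by exact_mod_cast hm
    rw [abs_of_nonneg (by linarith)]
    linarith
  · have : (1 : ℝ) ≤ m := by exact_mod_cast hm
    rw [abs_of_nonpos (by linarith)]
    linarith

lemma gcd_le_of_abs_mul_sub_le {a b m n : ℤ} {d ε : ℝ} (ha : |a * d - m| ≤ ε)
    (hb : |b * d - n| ≤ ε) (hne : m * b ≠ n * a) :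
    (Int.gcd a b : ℝ) ≤ ε * (|(a : ℝ)| + |(b : ℝ)|) := by
  have hdvd : (Int.gcd a b : ℤ) ∣ m * b - n * a :=
    dvd_sub (dvd_mul_of_dvd_right (Int.gcd_dvd_right ..) _)
      (dvd_mul_of_dvd_right (Int.gcd_dvd_left ..) _)
  have hle : (Int.gcd a b : ℤ) ≤ |m * b - n * a| :=
    Int.le_of_dvd (abs_pos.mpr (sub_ne_zero.mpr hne)) ((dvd_abs _ _).mpr hdvd)
  calc (Int.gcd a b : ℝ) ≤ |((m * b - n * a : ℤ) : ℝ)| := by exact_mod_cast hle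
    _ = |(a * d - m) * -b + (b * d - n) * a| := by congr 1; push_cast; ring
    _ ≤ |a * d - m| * |(b : ℝ)| + |b * d - n| * |(a : ℝ)| := by
      refine (abs_add_le _ _).trans_eq ?_
      rw [abs_mul, abs_mul, abs_neg]
    _ ≤ ε * |(b : ℝ)| + ε * |(a : ℝ)| := by gcongr
    _ = ε * (|(a : ℝ)| + |(b : ℝ)|) := by ring

lemma dvd_mul_of_forall_mul_eq_mul {ι : Type*} {s : Finset ι} {B n : ι → ℤ} {h : ℤ}
    (hgcd : ∀ a : ℤ, (∀ j ∈ s, a ∣ B j) → a ∣ h) {j₀ : ι} (hB : B j₀ ≠ 0)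
    (hprop : ∀ j ∈ s, n j₀ * B j = n j * B j₀) : B j₀ ∣ h * n j₀ := by
  obtain ⟨g, u, v, hg, hcop, hu, hv⟩ :=
    Int.exists_gcd_one' (Int.gcd_pos_of_ne_zero_right (n j₀) hB)
  have hvh : v ∣ h := hgcd v fun j hj => by
    have huv : u * B j = n j * v := by
      have := hprop j hj
      rw [hu, hv] at this
      exact mul_right_cancel₀ (by exact_mod_cast hg.ne' : (g : ℤ) ≠ 0) (by linarith)
    exact Int.dvd_of_dvd_mul_right_of_gcd_one ⟨n j, by rw [huv, mul_comm]⟩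
      (by rwa [Int.gcd_comm])
  obtain ⟨w, rfl⟩ := hvh
  exact ⟨w * u, by rw [hu, hv]; ring⟩

lemma quarter_le_abs_mul_sub_of_forall_mul_eq_mul {ι : Type*} {s : Finset ι} {B n : ι → ℤ}
    {h : ℕ} (hgcd : ∀ a : ℤ, (∀ j ∈ s, a ∣ B j) → a ∣ h) {j₀ : ι} (hB : B j₀ ≠ 0)
    (hdvd : (h : ℤ) ∣ B j₀) (hprop : ∀ j ∈ s, n j₀ * B j = n j * B j₀) {d : ℝ}
    (hd : ∀ m : ℤ, 1 / 4 ≤ |h * d - m|) : 1 / 4 ≤ |B j₀ * d - n j₀| := by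
  obtain ⟨m, hm⟩ := dvd_mul_of_forall_mul_eq_mul hgcd hB hprop
  have hpos : (0 : ℝ) < h := by
    have : h ≠ 0 := fun h0 => hB (by simpa [h0] using hdvd)
    positivity
  have hhB : (h : ℝ) ≤ |(B j₀ : ℝ)| := by
    rw [← Int.cast_abs, ← Int.natCast_natAbs]
    exact_mod_cast Nat.le_of_dvd (Int.natAbs_pos.mpr hB) (Int.natCast_dvd.mp hdvd)
  have hmR : (h : ℝ) * n j₀ = B j₀ * m := by exact_mod_cast hm
  have hfactor : |(h : ℝ) * (B j₀ * d - n j₀)| = |B j₀ * (h * d - m)| := by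
    congr 1
    linear_combination -hmR
  rw [abs_mul, abs_mul, Nat.abs_cast] at hfactor
  nlinarith [hd m, abs_nonneg ((h : ℝ) * d - m)]

lemma exists_inv_four_mul_le_distNearestInt {ι : Type*} {s : Finset ι} (hs : s.Nonempty)
    {B : ι → ℤ} {h W : ℕ} (hB : ∀ j ∈ s, B j ≠ 0) (hdvd : ∀ j ∈ s, (h : ℤ) ∣ B j)
    (hgcd : ∀ a : ℤ, (∀ j ∈ s, a ∣ B j) → a ∣ h)
    (hW : ∀ i ∈ s, ∀ j ∈ s, (B i).natAbs ≤ W * Int.gcd (B i) (B j))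
    {d : ℝ} (hd : ∀ m : ℤ, 1 / 4 ≤ |h * d - m|) :
    ∃ j ∈ s, 1 / (4 * W) ≤ distNearestInt (B j * d) := by
  by_contra! hsmall
  have hW' : ∀ i ∈ s, ∀ j ∈ s, |(B i : ℝ)| ≤ W * Int.gcd (B i) (B j) := fun i hi j hj => by
    rw [← Int.cast_abs, ← Int.natCast_natAbs]
    exact_mod_cast hW i hi j hj
  obtain ⟨j₀, hj₀⟩ := hs
  have hW₁ : (1 : ℝ) ≤ W := by
    have := hW j₀ hj₀ j₀ hj₀
    rw [Int.gcd_self] at this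
    exact_mod_cast Nat.le_of_mul_le_mul_right (by rwa [one_mul])
      (Int.natAbs_pos.mpr (hB j₀ hj₀))
  by_cases hprop : ∀ j ∈ s, round (B j₀ * d) * B j = round (B j * d) * B j₀
  · have := quarter_le_abs_mul_sub_of_forall_mul_eq_mul (n := fun j => round (B j * d)) hgcd
      (hB j₀ hj₀) (hdvd j₀ hj₀) hprop hd
    have hε : 1 / (4 * (W : ℝ)) ≤ 1 / 4 := by gcongr; linarith
    exact absurd (hsmall j₀ hj₀) (by unfold distNearestInt; linarith)
  · push Not at hprop
    obtain ⟨j, hj, hne⟩ := hprop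
    have hgcd_le := gcd_le_of_abs_mul_sub_le (hsmall j₀ hj₀).le (hsmall j hj).le hne
    have hg : (0 : ℝ) < Int.gcd (B j₀) (B j) := by
      exact_mod_cast Int.gcd_pos_of_ne_zero_left _ (hB j₀ hj₀)
    have : 1 / (4 * (W : ℝ)) * (|(B j₀ : ℝ)| + |(B j : ℝ)|) ≤ Int.gcd (B j₀) (B j) / 2 :=
      calc _ ≤ 1 / (4 * (W : ℝ)) * (W * Int.gcd (B j₀) (B j) + W * Int.gcd (B j₀) (B j)) := by
            gcongr
            · exact hW' j₀ hj₀ j hj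
            · exact Int.gcd_comm (B j₀) (B j) ▸ hW' j hj j₀ hj₀
        _ = Int.gcd (B j₀) (B j) / 2 := by field_simp; ring
    linarith

lemma natCast_gcd_natAbs_sub_dvd {ι : Type*} [Fintype ι] (x : ι → ℤ) (i j : ι) :
    (((univ : Finset (ι × ι)).gcd fun q => (x q.1 - x q.2).natAbs : ℕ) : ℤ) ∣ x i - x j :=
  Int.natCast_dvd.mpr (Finset.gcd_dvd (f := fun q : ι × ι => (x q.1 - x q.2).natAbs)
    (mem_univ (i, j)))

lemma dvd_gcd_natAbs_sub {ι : Type*} [Fintype ι] (x : ι → ℤ) (ℓ : ι) {a : ℤ}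
    (ha : ∀ j ≠ ℓ, a ∣ x j - x ℓ) :
    a ∣ (((univ : Finset (ι × ι)).gcd fun q => (x q.1 - x q.2).natAbs : ℕ) : ℤ) := by
  have ha' : ∀ j, a ∣ x j - x ℓ := fun j => by
    rcases eq_or_ne j ℓ with rfl | hj
    · simp
    · exact ha j hj
  refine Int.dvd_natCast.mpr (Finset.dvd_gcd fun q _ => Int.natAbs_dvd_natAbs.mpr ?_)
  simpa using dvd_sub (ha' q.1) (ha' q.2)

lemma natAbs_sub_le_wParam_mul_gcd {k : ℕ} (x : Fin k → ℤ) {i j ℓ : Fin k} (hi : i ≠ ℓ)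
    (hj : j ≠ ℓ) :
    (x i - x ℓ).natAbs ≤ wParam x * Int.gcd (x i - x ℓ) (x j - x ℓ) := by
  have hmem : (i, j, ℓ) ∈ univ.filter
      (fun t : Fin k × Fin k × Fin k => t.1 ≠ t.2.2 ∧ t.2.1 ≠ t.2.2) := by
    simp [hi, hj]
  have hle : (x i - x ℓ).natAbs / Int.gcd (x i - x ℓ) (x j - x ℓ) ≤ wParam x :=
    Finset.le_sup (f := fun t : Fin k × Fin k × Fin k => (x t.1 - x t.2.2).natAbs /
      Nat.gcd (x t.1 - x t.2.2).natAbs (x t.2.1 - x t.2.2).natAbs) hmem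
  calc (x i - x ℓ).natAbs
      = (x i - x ℓ).natAbs / Int.gcd (x i - x ℓ) (x j - x ℓ) * Int.gcd (x i - x ℓ) (x j - x ℓ) :=
        (Nat.div_mul_cancel (Nat.gcd_dvd_left _ _)).symm
    _ ≤ wParam x * Int.gcd (x i - x ℓ) (x j - x ℓ) := Nat.mul_le_mul_right _ hle

lemma exists_inv_four_mul_wParam_le_distNearestInt {k h : ℕ} (hk : 2 ≤ k) {x : Fin k → ℤ}
    (hinj : Injective x)
    (hgcd : (univ : Finset (Fin k × Fin k)).gcd (fun q => (x q.1 - x q.2).natAbs) = h)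
    (ℓ : Fin k) {d : ℝ} (hd : ∀ m : ℤ, 1 / 4 ≤ |h * d - m|) :
    ∃ j, 1 / (4 * wParam x) ≤ distNearestInt (((x j : ℝ) - x ℓ) * d) := by
  have : Nontrivial (Fin k) := Fin.nontrivial_iff_two_le.mpr hk
  obtain ⟨j, -, hj⟩ := exists_inv_four_mul_le_distNearestInt (s := univ.erase ℓ)
    (B := fun j => x j - x ℓ) univ_nontrivial.erase_nonempty
    (fun j hj => sub_ne_zero.mpr (hinj.ne (ne_of_mem_erase hj)))
    (fun j _ => hgcd ▸ natCast_gcd_natAbs_sub_dvd x j ℓ)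
    (fun c hc => hgcd ▸ dvd_gcd_natAbs_sub x ℓ fun j hj => hc j (mem_erase.mpr ⟨hj, mem_univ j⟩))
    (fun i hi j hj => natAbs_sub_le_wParam_mul_gcd x (ne_of_mem_erase hi) (ne_of_mem_erase hj))
    hd
  exact ⟨j, by simpa using hj⟩

lemma integral_eq_sum_of_measure_compl_range_eq_zero {α ι E : Type*} [MeasurableSpace α]
    [MeasurableSingletonClass α] [Fintype ι] [NormedAddCommGroup E] [NormedSpace ℝ E]
    [CompleteSpace E] {ν : Measure α} [IsFiniteMeasure ν] {a : ι → α} (ha : Injective a)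
    (hν : ν (Set.range a)ᶜ = 0) (f : α → E) :
    ∫ y, f y ∂ν = ∑ i, ν.real {a i} • f (a i) := by
  classical
  have hrestrict : ν.restrict ↑(univ.image a) = ν :=
    Measure.restrict_eq_self_of_ae_mem (by simpa using ae_iff.mpr hν)
  calc ∫ y, f y ∂ν = ∫ y in ↑(univ.image a), f y ∂ν := by rw [hrestrict]
    _ = ∑ i, ν.real {a i} • f (a i) := by
      rw [setIntegral_finset _ IntegrableOn.finset, sum_image fun i _ j _ hij => ha hij]

lemma Hsym_eq_sum {ι : Type*} [Fintype ι] {ν : Measure ℝ} [IsFiniteMeasure ν] {a : ι → ℝ}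
    (ha : Injective a) (hν : ν (Set.range a)ᶜ = 0) (d : ℝ) :
    Hsym ν d = ∑ i, ∑ j, ν.real {a i} * ν.real {a j} * distNearestInt ((a i - a j) * d) ^ 2 := by
  simp only [Hsym, integral_eq_sum_of_measure_compl_range_eq_zero ha hν, smul_eq_mul, mul_sum,
    mul_assoc]

lemma mul_sq_distNearestInt_le_Hsym {ι : Type*} [Fintype ι] {ν : Measure ℝ} [IsFiniteMeasure ν]
    {a : ι → ℝ} (ha : Injective a) (hν : ν (Set.range a)ᶜ = 0) (i j : ι) (d : ℝ) :
    ν.real {a i} * ν.real {a j} * distNearestInt ((a i - a j) * d) ^ 2 ≤ Hsym ν d := by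
  rw [Hsym_eq_sum ha hν]
  have hnonneg : ∀ i j, 0 ≤ ν.real {a i} * ν.real {a j} * distNearestInt ((a i - a j) * d) ^ 2 :=
    fun _ _ => by positivity
  exact (single_le_sum (fun j _ => hnonneg i j) (mem_univ j)).trans
    (single_le_sum (fun i _ => sum_nonneg fun j _ => hnonneg i j) (mem_univ i))

lemma le_HsymD {ν : Measure ℝ} {D : ℕ} {c : ℝ}
    (hc : ∀ d ∈ Set.Icc (1 / (4 * (D : ℝ))) (1 / (2 * (D : ℝ))), c ≤ Hsym ν d) :
    c ≤ HsymD ν D := by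
  refine le_csInf ((Set.nonempty_Icc.mpr ?_).image _) (by rintro _ ⟨d, hd, rfl⟩; exact hc d hd)
  rw [show 1 / (4 * (D : ℝ)) = 1 / (2 * D) / 2 by ring]
  exact half_le_self (by positivity)

lemma map_compl_range_eq_zero {Ω α ι : Type*} [MeasurableSpace Ω] [MeasurableSpace α]
    [MeasurableSingletonClass α] [Finite ι] {μ : Measure Ω} {X : Ω → α} (hX : Measurable X)
    {a : ι → α} (hμ : μ {ω | ∀ i, X ω ≠ a i} = 0) : μ.map X (Set.range a)ᶜ = 0 := by
  rw [Measure.map_apply hX (Set.finite_range a).measurableSet.compl, ← hμ]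
  congr 1
  ext ω
  simp [eq_comm]

lemma exists_inv_card_le_of_sum_eq_one {ι : Type*} [Fintype ι] [Nonempty ι] {p : ι → ℝ}
    (hp : ∑ i, p i = 1) : ∃ i, 1 / (Fintype.card ι : ℝ) ≤ p i := by
  obtain ⟨i, -, hi⟩ := exists_le_of_sum_le univ_nonempty (f := fun _ => 1 / (Fintype.card ι : ℝ))
    (g := p) (by simp [hp])
  exact ⟨i, hi⟩

/-- If `X` is an integer-valued random variable with exactly `k ≥ 3` atoms `x₁,…,x_k`
lying in a lattice of step `h` and not all contained in a non-trivial arithmetic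
progression of the lattice (the gcd of the pairwise differences is `h`), then
`H_h(X) ≥ (1/16) · min_i P(X = x_i) / (k (w(x) h)²)`. -/
theorem HsymD_lower_bound_atoms
    {Ω : Type*} [MeasurableSpace Ω] {μ : Measure Ω} [IsProbabilityMeasure μ]
    (X : Ω → ℝ) (hX : Measurable X)
    (k h : ℕ) (hk : 3 ≤ k) (hh : 0 < h)
    (x : Fin k → ℤ) (hinj : Function.Injective x)
    (p : Fin k → ℝ)
    (hatom : ∀ i, (μ {ω | X ω = (x i : ℝ)}).toReal = p i)
    (hsupp : μ {ω | ∀ i, X ω ≠ (x i : ℝ)} = 0)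
    (hgcd : (Finset.univ : Finset (Fin k × Fin k)).gcd
      (fun q => (x q.1 - x q.2).natAbs) = h) :
    (1 / 16 : ℝ) *
        (Finset.univ.inf' ⟨⟨0, by omega⟩, Finset.mem_univ _⟩ p) /
        (k * ((wParam x : ℝ) * h) ^ 2) ≤
      HsymD (μ.map X) h := by
  have := Measure.isProbabilityMeasure_map (μ := μ) hX.aemeasurable
  have : Nonempty (Fin k) := ⟨⟨0, by omega⟩⟩
  set a : Fin k → ℝ := fun i => x i
  have ha : Injective a := Int.cast_injective.comp hinj
  have hν : μ.map X (Set.range a)ᶜ = 0 := map_compl_range_eq_zero hX hsupp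
  have hp : ∀ i, (μ.map X).real {a i} = p i := fun i => by
    rw [measureReal_def, Measure.map_apply hX (measurableSet_singleton _)]
    exact hatom i
  have hp₀ : ∀ i, 0 ≤ p i := fun i => hp i ▸ measureReal_nonneg
  obtain ⟨ℓ, hℓ⟩ := exists_inv_card_le_of_sum_eq_one <| by
    simpa [hp] using (integral_eq_sum_of_measure_compl_range_eq_zero ha hν fun _ => (1 : ℝ)).symm
  rw [Fintype.card_fin] at hℓ
  set pmin := univ.inf' ⟨⟨0, by omega⟩, mem_univ _⟩ p
  have hpmin : 0 ≤ pmin := le_inf' _ _ fun i _ => hp₀ i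
  have hh' : (1 : ℝ) ≤ h := by exact_mod_cast hh
  refine le_HsymD fun d hd => ?_
  obtain ⟨j, hj⟩ := exists_inv_four_mul_wParam_le_distNearestInt (by omega) hinj hgcd ℓ
    (quarter_le_abs_mul_sub_intCast (by positivity) hd)
  calc (1 / 16 : ℝ) * pmin / (k * ((wParam x : ℝ) * h) ^ 2)
      = pmin * (1 / k) * (1 / (4 * wParam x)) ^ 2 * (1 / h) ^ 2 := by ring
    _ ≤ pmin * (1 / k) * (1 / (4 * wParam x)) ^ 2 :=
      mul_le_of_le_one_right (mul_nonneg (mul_nonneg hpmin (by positivity)) (by positivity))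
        (pow_le_one₀ (by positivity) ((div_le_one (by positivity)).mpr hh'))
    _ ≤ p j * p ℓ * distNearestInt ((a j - a ℓ) * d) ^ 2 := by
      gcongr
      · exact mul_nonneg (hp₀ j) (hp₀ ℓ)
      · exact hp₀ j
      · exact inf'_le _ (mem_univ j)
    _ ≤ Hsym (μ.map X) d := hp j ▸ hp ℓ ▸ mul_sq_distNearestInt_le_Hsym ha hν j ℓ d
end

section
/- Let (S_t)_{t≥0} be a discrete-time martingale with respect to a filtration (𝓕_t)_{t≥0}, with S₀ = 0 and increments μ_{t+1} = S_{t+1} − S_t. Suppose there exists c > 0 such that |μ_{t+1}| ≤ c almost surely for all t ≥ 0, and define V(t+1) = ∑_{i=0}^{t} E[μ_{i+1}² | 𝓕_i]. Then for every α, β > 0, P( there exists t ≥ 1 with S_t ≥ α and V(t) ≤ β ) ≤ exp( −α² / (2(β + cα)) ). -/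
/-!
For `0 ≤ λ` with `λ c ≤ 1`, the Taylor bound `exp y ≤ 1 + y + (1/2 + 2λc/9) y²` on `|y| ≤ λ c`
gives `E[exp (λ μ_{t+1}) | 𝓕_t] ≤ exp (g E[μ_{t+1}² | 𝓕_t])` with `g = (1/2 + 2λc/9) λ²`, so
`exp (λ S_t - g V(t))` is a nonnegative supermartingale started at `1`. On the event in question it
reaches `exp (λ α - g β)`, so Ville's maximal inequality (optional stopping at the first hitting
time) bounds the probability by `exp (-(λ α - g β))`, and `λ = α / (β + c α)` makes
`λ α - g β ≥ α² / (2 (β + c α))`.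
-/

open MeasureTheory

theorem Real.exp_le_one_add_add_mul_sq {y b : ℝ} (hy : |y| ≤ b) (hb : b ≤ 1) :
    Real.exp y ≤ 1 + y + (1 / 2 + 2 * b / 9) * y ^ 2 := by
  have htaylor := Real.exp_bound (hy.trans hb) (n := 3) (by norm_num)
  norm_num [Finset.sum_range_succ, Nat.factorial] at htaylor
  have hcube : |y| ^ 3 = |y| * y ^ 2 := by rw [pow_succ', sq_abs]
  nlinarith [(abs_sub_le_iff.1 htaylor).1, mul_le_mul_of_nonneg_right hy (sq_nonneg y)]

section CondExp

variable {Ω : Type*} {m m0 : MeasurableSpace Ω} {μ : Measure Ω} [IsFiniteMeasure μ]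
  {X : Ω → ℝ} {c : ℝ}

theorem integrable_exp_mul_of_abs_le (hX : AEStronglyMeasurable X μ)
    (hbdd : ∀ᵐ ω ∂μ, |X ω| ≤ c) {L : ℝ} (hL : 0 ≤ L) :
    Integrable (fun ω => Real.exp (L * X ω)) μ := by
  refine (integrable_const (Real.exp (L * c))).mono'
    (Real.continuous_exp.comp_aestronglyMeasurable (hX.const_mul L)) ?_
  filter_upwards [hbdd] with ω hω
  rw [Real.norm_eq_abs, Real.abs_exp, Real.exp_le_exp]
  exact mul_le_mul_of_nonneg_left (le_of_abs_le hω) hL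

theorem integrable_sq_of_abs_le (hX : AEStronglyMeasurable X μ) (hbdd : ∀ᵐ ω ∂μ, |X ω| ≤ c) :
    Integrable (fun ω => X ω ^ 2) μ := by
  refine (integrable_const (c ^ 2)).mono' (hX.pow 2) ?_
  filter_upwards [hbdd] with ω hω
  rw [Real.norm_eq_abs, abs_pow]
  exact pow_le_pow_left₀ (abs_nonneg _) hω 2

theorem condExp_exp_mul_le (hm : m ≤ m0) (hX : Integrable X μ) (hX0 : μ[X|m] =ᵐ[μ] 0)
    (hbdd : ∀ᵐ ω ∂μ, |X ω| ≤ c) {L : ℝ} (hL : 0 ≤ L) (hLc : L * c ≤ 1) :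
    μ[fun ω => Real.exp (L * X ω)|m] ≤ᵐ[μ]
      fun ω => Real.exp ((1 / 2 + 2 * (L * c) / 9) * L ^ 2 * μ[fun ω' => X ω' ^ 2|m] ω) := by
  set g := (1 / 2 + 2 * (L * c) / 9) * L ^ 2
  have hX2 := integrable_sq_of_abs_le hX.aestronglyMeasurable hbdd
  have hquad : Integrable (fun ω => 1 + L * X ω + g * X ω ^ 2) μ :=
    ((integrable_const 1).add (hX.const_mul L)).add (hX2.const_mul g)
  have hpointwise : (fun ω => Real.exp (L * X ω)) ≤ᵐ[μ] fun ω => 1 + L * X ω + g * X ω ^ 2 := by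
    filter_upwards [hbdd] with ω hω
    have hy : |L * X ω| ≤ L * c := by
      rw [abs_mul, abs_of_nonneg hL]; exact mul_le_mul_of_nonneg_left hω hL
    calc Real.exp (L * X ω) ≤ 1 + L * X ω + (1 / 2 + 2 * (L * c) / 9) * (L * X ω) ^ 2 :=
          Real.exp_le_one_add_add_mul_sq hy hLc
      _ = 1 + L * X ω + g * X ω ^ 2 := by ring
  have hcondQuad : μ[fun ω => 1 + L * X ω + g * X ω ^ 2|m] =ᵐ[μ]
      fun ω => 1 + g * μ[fun ω' => X ω' ^ 2|m] ω := by
    have hsum : (fun ω => 1 + L * X ω + g * X ω ^ 2) =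
        (fun _ => (1 : ℝ)) + L • X + g • fun ω => X ω ^ 2 := rfl
    rw [hsum]
    filter_upwards [condExp_add ((integrable_const 1).add (hX.smul L)) (hX2.smul g) m,
      condExp_add (integrable_const 1) (hX.smul L) m, condExp_smul (μ := μ) L X m,
      condExp_smul (μ := μ) g (fun ω => X ω ^ 2) m, hX0] with ω h1 h2 h3 h4 h5
    simp only [h1, Pi.add_apply, h2, h3, h4, Pi.smul_apply, h5, condExp_const hm]
    simp
  filter_upwards [condExp_mono (integrable_exp_mul_of_abs_le hX.aestronglyMeasurable hbdd hL)
    hquad hpointwise, hcondQuad] with ω hmono hquadω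
  rw [hquadω] at hmono
  linarith [Real.add_one_le_exp (g * μ[fun ω' => X ω' ^ 2|m] ω)]

end CondExp

section ExpSupermartingale

variable {Ω : Type*} {m0 : MeasurableSpace Ω} {μ : Measure Ω} {𝓕 : Filtration ℕ m0}
  {S : ℕ → Ω → ℝ}

/-- The paper's `V t` for `t ≥ 1`, extended by `0` at `t = 0`. -/
noncomputable def predictableQuadVar (μ : Measure Ω) (𝓕 : Filtration ℕ m0) (S : ℕ → Ω → ℝ)
    (t : ℕ) (ω : Ω) : ℝ :=
  ∑ i ∈ Finset.range t, μ[fun ω' => (S (i + 1) ω' - S i ω') ^ 2|𝓕 i] ω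

theorem predictableQuadVar_succ (t : ℕ) (ω : Ω) :
    predictableQuadVar μ 𝓕 S (t + 1) ω = predictableQuadVar μ 𝓕 S t ω +
      μ[fun ω' => (S (t + 1) ω' - S t ω') ^ 2|𝓕 t] ω :=
  Finset.sum_range_succ _ _

theorem stronglyMeasurable_predictableQuadVar (t : ℕ) :
    StronglyMeasurable[𝓕 t] (predictableQuadVar μ 𝓕 S t) :=
  Finset.stronglyMeasurable_fun_sum _ fun _ hi =>
    stronglyMeasurable_condExp.mono (𝓕.mono (Finset.mem_range.mp hi).le)

noncomputable def freedmanExp (μ : Measure Ω) (𝓕 : Filtration ℕ m0) (S : ℕ → Ω → ℝ)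
    (L g : ℝ) (t : ℕ) (ω : Ω) : ℝ :=
  Real.exp (L * S t ω - g * predictableQuadVar μ 𝓕 S t ω)

variable {L g : ℝ}

theorem freedmanExp_succ (t : ℕ) (ω : Ω) :
    freedmanExp μ 𝓕 S L g (t + 1) ω = freedmanExp μ 𝓕 S L g t ω *
      Real.exp (-(g * μ[fun ω' => (S (t + 1) ω' - S t ω') ^ 2|𝓕 t] ω)) *
      Real.exp (L * (S (t + 1) ω - S t ω)) := by
  simp only [freedmanExp, predictableQuadVar_succ, ← Real.exp_add]
  ring_nf

theorem stronglyAdapted_freedmanExp (hS : StronglyAdapted 𝓕 S) :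
    StronglyAdapted 𝓕 (freedmanExp μ 𝓕 S L g) := fun t =>
  Real.continuous_exp.comp_stronglyMeasurable
    (((hS t).const_mul L).sub ((stronglyMeasurable_predictableQuadVar t).const_mul g))

theorem freedmanExp_zero (hS0 : ∀ ω, S 0 ω = 0) : freedmanExp μ 𝓕 S L g 0 = 1 := by
  ext ω
  simp [freedmanExp, predictableQuadVar, hS0]

variable [IsFiniteMeasure μ] {c : ℝ}

theorem integrable_freedmanExp (hS : Martingale S 𝓕 μ) (hS0 : ∀ ω, S 0 ω = 0)
    (hbdd : ∀ t, ∀ᵐ ω ∂μ, |S (t + 1) ω - S t ω| ≤ c) (hL : 0 ≤ L) (hg : 0 ≤ g) (t : ℕ) :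
    Integrable (freedmanExp μ 𝓕 S L g t) μ := by
  induction t with
  | zero => rw [freedmanExp_zero hS0]; exact integrable_const 1
  | succ t ih =>
    rw [show freedmanExp μ 𝓕 S L g (t + 1) = _ from funext (freedmanExp_succ t)]
    have hQ : ∀ᵐ ω ∂μ, 0 ≤ μ[fun ω' => (S (t + 1) ω' - S t ω') ^ 2|𝓕 t] ω :=
      condExp_nonneg (.of_forall fun ω => sq_nonneg _)
    refine (ih.mul_bdd (c := 1) ?_ ?_).mul_bdd (c := Real.exp (L * c)) ?_ ?_
    · have := (stronglyMeasurable_condExp (m := 𝓕 t) (μ := μ)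
        (f := fun ω' => (S (t + 1) ω' - S t ω') ^ 2)).mono (𝓕.le t) |>.measurable
      exact (by fun_prop : Measurable _).aestronglyMeasurable
    · filter_upwards [hQ] with ω hω
      rw [Real.norm_eq_abs, Real.abs_exp, Real.exp_le_one_iff, neg_nonpos]
      exact mul_nonneg hg hω
    · have := ((hS.stronglyMeasurable (t + 1)).mono (𝓕.le _)).measurable
      have := ((hS.stronglyMeasurable t).mono (𝓕.le _)).measurable
      exact (by fun_prop : Measurable _).aestronglyMeasurable
    · filter_upwards [hbdd t] with ω hω
      rw [Real.norm_eq_abs, Real.abs_exp, Real.exp_le_exp]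
      exact mul_le_mul_of_nonneg_left (le_of_abs_le hω) hL

theorem supermartingale_freedmanExp (hS : Martingale S 𝓕 μ) (hS0 : ∀ ω, S 0 ω = 0)
    (hbdd : ∀ t, ∀ᵐ ω ∂μ, |S (t + 1) ω - S t ω| ≤ c) (hc : 0 ≤ c) (hL : 0 ≤ L)
    (hLc : L * c ≤ 1) :
    Supermartingale (freedmanExp μ 𝓕 S L ((1 / 2 + 2 * (L * c) / 9) * L ^ 2)) 𝓕 μ := by
  set g := (1 / 2 + 2 * (L * c) / 9) * L ^ 2
  have hint := integrable_freedmanExp hS hS0 hbdd hL (g := g) (by positivity)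
  refine supermartingale_nat (stronglyAdapted_freedmanExp hS.stronglyAdapted) hint fun t => ?_
  set Q := μ[fun ω' => (S (t + 1) ω' - S t ω') ^ 2|𝓕 t]
  set Δ := S (t + 1) - S t
  set A := fun ω => freedmanExp μ 𝓕 S L g t ω * Real.exp (-(g * Q ω))
  have hA : StronglyMeasurable[𝓕 t] A :=
    (stronglyAdapted_freedmanExp hS.stronglyAdapted t).mul
      (Real.continuous_exp.comp_stronglyMeasurable (stronglyMeasurable_condExp.const_mul g).neg)
  have hsucc : freedmanExp μ 𝓕 S L g (t + 1) = A * fun ω => Real.exp (L * Δ ω) :=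
    funext (freedmanExp_succ t)
  have hΔint : Integrable Δ μ := (hS.integrable _).sub (hS.integrable _)
  have hΔ0 : μ[Δ|𝓕 t] =ᵐ[μ] 0 := by
    filter_upwards [condExp_sub (hS.integrable (t + 1)) (hS.integrable t) (𝓕 t),
      hS.condExp_ae_eq (Nat.le_succ t), hS.condExp_ae_eq (le_refl t)] with ω hsub hnext hcur
    rw [Pi.zero_apply, hsub, Pi.sub_apply, hcur]
    exact sub_eq_zero.2 hnext
  have hmgf := condExp_exp_mul_le (𝓕.le t) hΔint hΔ0 (hbdd t) hL hLc
  rw [hsucc]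
  filter_upwards [condExp_mul_of_stronglyMeasurable_left hA (hsucc ▸ hint (t + 1))
    (integrable_exp_mul_of_abs_le hΔint.aestronglyMeasurable (hbdd t) hL), hmgf]
    with ω hpull hmgfω
  rw [hpull]
  calc A ω * μ[fun ω => Real.exp (L * Δ ω)|𝓕 t] ω ≤ A ω * Real.exp (g * Q ω) :=
        mul_le_mul_of_nonneg_left hmgfω (by simp only [A, freedmanExp]; positivity)
    _ = freedmanExp μ 𝓕 S L g t ω := by
        simp only [A, mul_assoc, ← Real.exp_add, neg_add_cancel, Real.exp_zero, mul_one]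

end ExpSupermartingale

namespace MeasureTheory

variable {Ω : Type*} {m0 : MeasurableSpace Ω} {μ : Measure Ω} [IsFiniteMeasure μ]
  {𝓕 : Filtration ℕ m0} {f : ℕ → Ω → ℝ} {K : ℝ}

theorem Supermartingale.maximal_ineq_le
    (hf : Supermartingale f 𝓕 μ) (hnonneg : 0 ≤ f) (hK : 0 ≤ K) (n : ℕ) :
    K * μ.real {ω | ∃ t ≤ n, K ≤ f t ω} ≤ ∫ ω, f 0 ω ∂μ := by
  set τ : Ω → WithTop ℕ := fun ω => (hittingBtwn f (Set.Ici K) 0 n ω : ℕ)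
  have hτ : IsStoppingTime 𝓕 τ :=
    hf.stronglyAdapted.adapted.isStoppingTime_hittingBtwn measurableSet_Ici
  have hτn : ∀ ω, τ ω ≤ n := fun ω => WithTop.coe_le_coe.mpr (hittingBtwn_le ω)
  have hoptional : ∫ ω, stoppedValue f τ ω ∂μ ≤ ∫ ω, f 0 ω ∂μ := by
    have := hf.neg.expected_stoppedValue_mono (isStoppingTime_const 𝓕 0) hτ
      (fun ω => zero_le) hτn
    simpa [stoppedValue, integral_neg] using this
  have hsubset : {ω | ∃ t ≤ n, K ≤ f t ω} ⊆ {ω | K ≤ stoppedValue f τ ω} :=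
    fun ω ⟨t, htn, ht⟩ => stoppedValue_hittingBtwn_mem ⟨t, ⟨zero_le, htn⟩, ht⟩
  calc K * μ.real {ω | ∃ t ≤ n, K ≤ f t ω}
      ≤ K * μ.real {ω | K ≤ stoppedValue f τ ω} :=
        mul_le_mul_of_nonneg_left (measureReal_mono hsubset) hK
    _ ≤ ∫ ω, stoppedValue f τ ω ∂μ :=
        mul_meas_ge_le_integral_of_nonneg (.of_forall fun ω => hnonneg _ _)
          (integrable_stoppedValue ℕ hτ hf.integrable hτn) K
    _ ≤ ∫ ω, f 0 ω ∂μ := hoptional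

theorem Supermartingale.maximal_ineq
    (hf : Supermartingale f 𝓕 μ) (hnonneg : 0 ≤ f) (hK : 0 ≤ K) :
    K * μ.real {ω | ∃ t, K ≤ f t ω} ≤ ∫ ω, f 0 ω ∂μ := by
  set A : ℕ → Set Ω := fun n => {ω | ∃ t ≤ n, K ≤ f t ω}
  have hmono : Monotone A := fun n m hnm ω ⟨t, htn, ht⟩ => ⟨t, htn.trans hnm, ht⟩
  have hunion : {ω | ∃ t, K ≤ f t ω} = ⋃ n, A n := by
    ext ω
    simp only [A, Set.mem_ofPred_eq, Set.mem_iUnion]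
    exact ⟨fun ⟨t, ht⟩ => ⟨t, t, le_rfl, ht⟩, fun ⟨_, t, _, ht⟩ => ⟨t, ht⟩⟩
  rw [hunion]
  have hlim : Filter.Tendsto (fun n => K * μ.real (A n)) Filter.atTop
      (nhds (K * μ.real (⋃ n, A n))) :=
    ((ENNReal.tendsto_toReal (measure_ne_top μ _)).comp
      (tendsto_measure_iUnion_atTop hmono)).const_mul K
  exact le_of_tendsto' hlim (hf.maximal_ineq_le hnonneg hK)

end MeasureTheory

theorem freedman_exponent_le {α β c : ℝ} (hα : 0 ≤ α) (hc : 0 ≤ c) (hs : 0 < β + c * α) :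
    α ^ 2 / (2 * (β + c * α)) ≤ α / (β + c * α) * α -
      (1 / 2 + 2 * (α / (β + c * α) * c) / 9) * (α / (β + c * α)) ^ 2 * β := by
  obtain ⟨s, rfl⟩ : ∃ s, β = s - c * α := ⟨β + c * α, by ring⟩
  rw [sub_add_cancel] at hs ⊢
  have key : α / s * α - (1 / 2 + 2 * (α / s * c) / 9) * (α / s) ^ 2 * (s - c * α) -
      α ^ 2 / (2 * s) = α ^ 2 * (c * α) * (4 * c * α + 5 * s) / (18 * s ^ 3) := by
    field_simp
    ring
  have : 0 ≤ α ^ 2 * (c * α) * (4 * c * α + 5 * s) / (18 * s ^ 3) := by positivity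
  linarith

/-- Freedman's inequality: for a martingale `(S_t)` with `S₀ = 0`, increments bounded by
`c`, and predictable quadratic variation `V(t+1) = ∑_{i=0}^t E[μ_{i+1}² | 𝓕_i]`,
`P(∃ t ≥ 1, S_t ≥ α and V(t) ≤ β) ≤ exp(-α²/(2(β + cα)))`. -/
theorem freedman_inequality
    {Ω : Type*} {m0 : MeasurableSpace Ω} {μ : Measure Ω} [IsProbabilityMeasure μ]
    (𝓕 : Filtration ℕ m0) (S : ℕ → Ω → ℝ)
    (hmart : Martingale S 𝓕 μ)
    (hS0 : ∀ ω, S 0 ω = 0)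
    (c : ℝ) (hc : 0 < c)
    (hbdd : ∀ t : ℕ, ∀ᵐ ω ∂μ, |S (t + 1) ω - S t ω| ≤ c)
    (V : ℕ → Ω → ℝ)
    (hV : ∀ t : ℕ, ∀ ω, V (t + 1) ω =
      ∑ i ∈ Finset.range (t + 1), (μ[fun ω' => (S (i + 1) ω' - S i ω') ^ 2|𝓕 i]) ω)
    (α β : ℝ) (hα : 0 < α) (hβ : 0 < β) :
    (μ {ω | ∃ t : ℕ, 1 ≤ t ∧ α ≤ S t ω ∧ V t ω ≤ β}).toReal ≤
      Real.exp (-α ^ 2 / (2 * (β + c * α))) := by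
  have hs : 0 < β + c * α := by positivity
  set L := α / (β + c * α)
  set g := (1 / 2 + 2 * (L * c) / 9) * L ^ 2
  have hL : 0 ≤ L := by positivity
  have hLc : L * c ≤ 1 := by rw [div_mul_eq_mul_div, div_le_one hs]; linarith
  have hg : 0 ≤ g := by positivity
  have hM : Supermartingale (freedmanExp μ 𝓕 S L g) 𝓕 μ :=
    supermartingale_freedmanExp hmart hS0 hbdd hc.le hL hLc
  set K := Real.exp (L * α - g * β)
  have hsubset : {ω | ∃ t : ℕ, 1 ≤ t ∧ α ≤ S t ω ∧ V t ω ≤ β} ⊆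
      {ω | ∃ t, K ≤ freedmanExp μ 𝓕 S L g t ω} := by
    rintro ω ⟨_ | t, ht, hSt, hVt⟩
    · omega
    rw [hV] at hVt
    refine ⟨t + 1, Real.exp_le_exp.2 ?_⟩
    unfold predictableQuadVar
    gcongr
  have hK : 0 < K := Real.exp_pos _
  have hville := hM.maximal_ineq (fun _ _ => (Real.exp_pos _).le) hK.le
  rw [freedmanExp_zero hS0] at hville
  calc (μ {ω | ∃ t : ℕ, 1 ≤ t ∧ α ≤ S t ω ∧ V t ω ≤ β}).toReal
      ≤ μ.real {ω | ∃ t, K ≤ freedmanExp μ 𝓕 S L g t ω} := measureReal_mono hsubset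
    _ ≤ 1 / K := (le_div_iff₀' hK).2 (by simpa using hville)
    _ = Real.exp (-(L * α - g * β)) := by rw [one_div, Real.exp_neg]
    _ ≤ Real.exp (-α ^ 2 / (2 * (β + c * α))) := by
        rw [Real.exp_le_exp, neg_div, neg_le_neg_iff]
        exact freedman_exponent_le hα.le hc.le hs
end

section
/- Let (β_i)_{i≥1} be independent and identically distributed random variables taking values in {−1, 0, 1, 2, …}. For a positive integer s, let W_t = s + ∑_{i=1}^t β_i and let τ = inf{ t : W_t = 0 } be the first hitting time of 0. Then for every positive integer t, P(τ = t) ≤ (s/t) · P(W_t = 0). -/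
/-! Cycle lemma. Extend the increments `β₀, …, β_{t-1}` periodically. If the rotation starting at
`k < t` first hits `0` at time `t`, then, since the walk is skip-free, the partial sum at `k + t`
is a strict running minimum lying in the window `[m - s, m)`, where `m` is the minimum of the
partial sums over the first period; distinct such `k` give distinct values, so at most `s`
rotations are good, and none unless `W_t = 0`. The iid increments are invariant in law under
rotation, so summing over the `t` rotations gives `t · P(τ = t) = E[#good] ≤ s · P(W_t = 0)`. -/

open MeasureTheory ProbabilityTheory Finset
open Fin.NatCast
open scoped ENNReal

def FirstHitsZeroAt (s : ℕ) (w : ℕ → ℤ) (t : ℕ) : Prop :=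
  (s : ℤ) + ∑ i ∈ range t, w i = 0 ∧ ∀ u < t, (s : ℤ) + ∑ i ∈ range u, w i ≠ 0

instance (s : ℕ) (w : ℕ → ℤ) (t : ℕ) : Decidable (FirstHitsZeroAt s w t) :=
  inferInstanceAs (Decidable (_ ∧ _))

section CycleLemma

variable {s t : ℕ} {w : ℕ → ℤ}

theorem firstHitsZeroAt_congr {w' : ℕ → ℤ} (h : ∀ n < t, w n = w' n) :
    FirstHitsZeroAt s w t ↔ FirstHitsZeroAt s w' t := by
  have hsum : ∀ u ≤ t, ∑ i ∈ range u, w i = ∑ i ∈ range u, w' i := fun u hu =>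
    sum_congr rfl fun i hi => h i (by grind)
  unfold FirstHitsZeroAt
  rw [hsum t le_rfl]
  exact and_congr_right' <| forall₂_congr fun u hu => by rw [hsum u hu.le]

theorem sum_range_shift_of_periodic (hw : Function.Periodic w t) (k : ℕ) :
    ∑ i ∈ range t, w (k + i) = ∑ i ∈ range t, w i := by
  induction k with
  | zero => simp
  | succ k ih =>
    have hsucc := sum_range_succ' (fun i => w (k + i)) t
    rw [sum_range_succ, hw k] at hsucc
    simp only [← add_assoc, add_zero, Nat.add_right_comm k _ 1] at hsucc
    omega

theorem sum_range_add_period (hw : Function.Periodic w t) (k : ℕ) :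
    ∑ i ∈ range (k + t), w i = ∑ i ∈ range k, w i + ∑ i ∈ range t, w i := by
  rw [sum_range_add, sum_range_shift_of_periodic hw]

/-- A walk with increments `≥ -1` cannot jump over `0`. -/
theorem add_sum_range_pos_of_forall_ne_zero (hw : ∀ n, -1 ≤ w n)
    (h : ∀ u < t, (s : ℤ) + ∑ i ∈ range u, w i ≠ 0) :
    ∀ u < t, 0 < (s : ℤ) + ∑ i ∈ range u, w i := by
  intro u hu
  induction u with
  | zero => have := h 0 hu; simp only [range_zero, sum_empty] at this ⊢; omega
  | succ u ih =>
    have := h (u + 1) hu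
    rw [sum_range_succ] at this ⊢
    have := ih (by omega)
    have := hw u
    omega

theorem FirstHitsZeroAt.sum_eq_zero_of_shift (hw : Function.Periodic w t) {k : ℕ}
    (hk : FirstHitsZeroAt s (fun i => w (k + i)) t) :
    (s : ℤ) + ∑ i ∈ range t, w i = 0 :=
  sum_range_shift_of_periodic hw k ▸ hk.1

theorem FirstHitsZeroAt.sum_range_lt_of_shift (hw : Function.Periodic w t)
    (hskip : ∀ n, -1 ≤ w n) {k : ℕ} (hkt : k < t)
    (hk : FirstHitsZeroAt s (fun i => w (k + i)) t) :
    ∀ j < k + t, ∑ i ∈ range (k + t), w i < ∑ i ∈ range j, w i := by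
  have hdrop : ∑ i ∈ range (k + t), w i = ∑ i ∈ range k, w i - s := by
    rw [sum_range_add_period hw]; linarith [hk.sum_eq_zero_of_shift hw]
  have hpos := add_sum_range_pos_of_forall_ne_zero (fun n => hskip (k + n)) hk.2
  have hafter : ∀ u < t, ∑ i ∈ range (k + t), w i < ∑ i ∈ range (k + u), w i := by
    intro u hu
    rw [sum_range_add w k u]
    linarith [hpos u hu]
  intro j hj
  rcases le_or_gt k j with hkj | hjk
  · obtain ⟨u, rfl⟩ := Nat.exists_eq_add_of_le hkj
    exact hafter u (by omega)
  · -- by periodicity the sum at `j + t` is `s` below the sum at `j`, and `j + t` lies after `k`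
    have hj' : ∑ i ∈ range (j + t), w i = ∑ i ∈ range j, w i - s := by
      rw [sum_range_add_period hw]; linarith [hk.sum_eq_zero_of_shift hw]
    have := hafter (t - (k - j)) (by omega)
    rw [show k + (t - (k - j)) = j + t by omega] at this
    omega

theorem card_filter_firstHitsZeroAt_shift_le (hw : Function.Periodic w t)
    (hskip : ∀ n, -1 ≤ w n) :
    #{k ∈ range t | FirstHitsZeroAt s (fun i => w (k + i)) t} ≤ s := by
  rcases t.eq_zero_or_pos with rfl | ht
  · simp
  set S : ℕ → ℤ := fun n => ∑ i ∈ range n, w i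
  obtain ⟨j₀, hj₀, hmin⟩ := (range t).exists_min_image S (nonempty_range_iff.mpr ht.ne')
  rw [mem_range] at hj₀
  calc #{k ∈ range t | FirstHitsZeroAt s (fun i => w (k + i)) t}
      ≤ #(Ico (S j₀ - s) (S j₀)) := by
        refine card_le_card_of_injOn (fun k => S (k + t)) (fun k hk => ?_) fun k hk k' hk' h => ?_
        · simp only [coe_filter, mem_range, Set.mem_ofPred_eq] at hk
          have hlt : S (k + t) < S j₀ := hk.2.sum_range_lt_of_shift hw hskip hk.1 j₀ (by omega)
          have hge := hmin k (mem_range.mpr hk.1)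
          have hdrop : S (k + t) = S k - s := by
            simp only [S, sum_range_add_period hw]; linarith [hk.2.sum_eq_zero_of_shift hw]
          simp only [coe_Ico, Set.mem_Ico]
          omega
        · simp only [coe_filter, mem_range, Set.mem_ofPred_eq] at hk hk'
          by_contra hne
          rcases Nat.lt_or_gt_of_ne hne with hkk' | hkk'
          · exact (hk'.2.sum_range_lt_of_shift hw hskip hk'.1 (k + t) (by omega)).ne' h
          · exact (hk.2.sum_range_lt_of_shift hw hskip hk.1 (k' + t) (by omega)).ne h
    _ = s := by simp

theorem card_filter_firstHitsZeroAt_rotate_le [NeZero t] (v : Fin t → ℤ) (hskip : ∀ i, -1 ≤ v i) :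
    #{k : Fin t | FirstHitsZeroAt s (fun n => v (k + (n : Fin t))) t} ≤
      if (s : ℤ) + ∑ i ∈ range t, v i = 0 then s else 0 := by
  set w : ℕ → ℤ := fun n => v n
  have hw : Function.Periodic w t := fun n => by simp [w]
  have hshift (k : Fin t) (n : ℕ) : v (k + (n : Fin t)) = w (k + n) := by simp [w]
  simp only [hshift]
  split_ifs with hsum
  · calc #{k : Fin t | FirstHitsZeroAt s (fun n => w (k + n)) t}
        ≤ #{k ∈ range t | FirstHitsZeroAt s (fun i => w (k + i)) t} := by
          refine card_le_card_of_injOn Fin.val (fun k hk => ?_) Fin.val_injective.injOn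
          simp only [coe_filter, mem_univ, true_and, Set.mem_ofPred_eq, mem_range] at hk ⊢
          exact ⟨k.isLt, hk⟩
      _ ≤ s := card_filter_firstHitsZeroAt_shift_le hw fun n => hskip _
  · simp only [nonpos_iff_eq_zero, card_eq_zero, filter_eq_empty_iff]
    exact fun k _ hk => hsum (hk.sum_eq_zero_of_shift hw)

end CycleLemma

theorem MeasureTheory.Measure.pi_map_addLeft {G E : Type*} [AddGroup G] [Fintype G] [MeasurableSpace E]
    (ν : Measure E) [SigmaFinite ν] (k : G) :
    (Measure.pi fun _ : G => ν).map (fun v i => v (k + i)) = Measure.pi fun _ => ν := by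
  convert (measurePreserving_piCongrLeft (fun _ : G => ν) (Equiv.addLeft k).symm).map_eq
  simp [MeasurableEquiv.coe_piCongrLeft, Equiv.piCongrLeft_apply_eq_cast]

theorem natCast_mul_measure_firstHitsZeroAt_le {s t : ℕ} [NeZero t] (P : Measure (Fin t → ℤ))
    (hrot : ∀ k : Fin t, P.map (fun v i => v (k + i)) = P)
    (hskip : ∀ᵐ v ∂P, ∀ i, -1 ≤ v i) :
    t * P {v | FirstHitsZeroAt s (fun n => v n) t}
      ≤ s * P {v | (s : ℤ) + ∑ i ∈ range t, v i = 0} := by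
  set A := {v : Fin t → ℤ | FirstHitsZeroAt s (fun n => v n) t}
  set B := {v : Fin t → ℤ | (s : ℤ) + ∑ i ∈ range t, v i = 0}
  have hrotA (k : Fin t) : P ((fun v i => v (k + i)) ⁻¹' A) = P A := by
    rw [← Measure.map_apply .of_discrete .of_discrete, hrot]
  have hcount (v : Fin t → ℤ) (hv : ∀ i, -1 ≤ v i) :
      (#{k : Fin t | FirstHitsZeroAt s (fun n => v (k + (n : Fin t))) t} : ℝ≥0∞) ≤
        s * B.indicator 1 v := by
    have := card_filter_firstHitsZeroAt_rotate_le (s := s) v hv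
    by_cases hB : (s : ℤ) + ∑ i ∈ range t, v i = 0
    · rw [if_pos hB] at this
      rw [Set.indicator_of_mem (s := B) hB, Pi.one_apply, mul_one]
      exact_mod_cast this
    · rw [if_neg hB, nonpos_iff_eq_zero] at this
      simp [this]
  calc (t : ℝ≥0∞) * P A = ∑ k : Fin t, P ((fun v i => v (k + i)) ⁻¹' A) := by simp [hrotA]
    _ = ∫⁻ v, #{k : Fin t | FirstHitsZeroAt s (fun n => v (k + (n : Fin t))) t} ∂P := by
        simp_rw [← lintegral_indicator_one (α := Fin t → ℤ) MeasurableSet.of_discrete]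
        rw [← lintegral_finsetSum _ fun _ _ => Measurable.of_discrete]
        simp [Set.indicator_apply, A]
    _ ≤ ∫⁻ v, s * B.indicator 1 v ∂P := lintegral_mono_ae (hskip.mono hcount)
    _ = s * P B := by
        rw [lintegral_const_mul _ Measurable.of_discrete, lintegral_indicator_one .of_discrete]

theorem hitting_time_le_spitzer_general
    {Ω : Type*} [MeasurableSpace Ω] {μ : Measure Ω} [IsProbabilityMeasure μ]
    (β : ℕ → Ω → ℤ) (hmeas : ∀ i, Measurable (β i))
    (hindep : iIndepFun β μ)
    (hident : ∀ i, IdentDistrib (β i) (β 0) μ μ)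
    (hval : ∀ i, ∀ᵐ ω ∂μ, -1 ≤ β i ω)
    (s : ℕ)
    (W : ℕ → Ω → ℤ) (hW : ∀ t ω, W t ω = (s : ℤ) + ∑ i ∈ Finset.range t, β i ω)
    (t : ℕ) (ht : 0 < t) :
    (μ {ω | W t ω = 0 ∧ ∀ u < t, W u ω ≠ 0}).toReal ≤
      ((s : ℝ) / t) * (μ {ω | W t ω = 0}).toReal := by
  have : NeZero t := ⟨ht.ne'⟩
  set X : Ω → Fin t → ℤ := fun ω i => β i ω
  have hX : Measurable X := measurable_pi_lambda _ fun i => hmeas i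
  have hlaw : μ.map X = Measure.pi fun _ => μ.map (β 0) := by
    rw [(hindep.precomp Fin.val_injective).map_fun_eq_pi_map (f := fun i : Fin t => β i)
      fun i => (hmeas i).aemeasurable]
    simp_rw [(hident _).map_eq]
  have hXβ (ω : Ω) : ∀ n < t, X ω n = β n ω := fun n hn => by
    simp [X, Fin.val_natCast, Nat.mod_eq_of_lt hn]
  have hA : {ω | W t ω = 0 ∧ ∀ u < t, W u ω ≠ 0} =
      X ⁻¹' {v | FirstHitsZeroAt s (fun n => v n) t} := by
    ext ω
    change _ ↔ FirstHitsZeroAt s (fun n => X ω n) t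
    rw [firstHitsZeroAt_congr (hXβ ω)]
    simp [FirstHitsZeroAt, hW]
  have hB : {ω | W t ω = 0} = X ⁻¹' {v | (s : ℤ) + ∑ i ∈ range t, v i = 0} := by
    ext ω
    simp [hW, sum_congr rfl fun n hn => hXβ ω n (mem_range.mp hn)]
  have key := natCast_mul_measure_firstHitsZeroAt_le (s := s) (μ.map X)
    (fun k => by rw [hlaw, Measure.pi_map_addLeft])
    ((ae_map_iff hX.aemeasurable .of_discrete).mpr (ae_all_iff.mpr fun i => hval i))
  rw [Measure.map_apply hX .of_discrete, Measure.map_apply hX .of_discrete, ← hA, ← hB] at key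
  have hreal := ENNReal.toReal_mono (by finiteness) key
  simp only [ENNReal.toReal_mul, ENNReal.toReal_natCast] at hreal
  rw [div_mul_eq_mul_div, le_div_iff₀ (by positivity)]
  linarith

/-- Spitzer-type bound for left-continuous random walks: if `(βᵢ)` are iid integer-valued
random variables with `βᵢ ≥ -1`, `W_t = s + ∑_{i=1}^t βᵢ` with `s ≥ 1`, and
`τ = inf{t : W_t = 0}`, then `P(τ = t) ≤ (s/t)·P(W_t = 0)` for every `t ≥ 1`. -/
theorem hitting_time_le_spitzer
    {Ω : Type*} [MeasurableSpace Ω] {μ : Measure Ω} [IsProbabilityMeasure μ]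
    (β : ℕ → Ω → ℤ) (hmeas : ∀ i, Measurable (β i))
    (hindep : iIndepFun β μ)
    (hident : ∀ i, IdentDistrib (β i) (β 0) μ μ)
    (hval : ∀ i, ∀ᵐ ω ∂μ, -1 ≤ β i ω)
    (s : ℕ) (hs : 0 < s)
    (W : ℕ → Ω → ℤ) (hW : ∀ t ω, W t ω = (s : ℤ) + ∑ i ∈ Finset.range t, β i ω)
    (t : ℕ) (ht : 0 < t) :
    (μ {ω | W t ω = 0 ∧ ∀ u < t, W u ω ≠ 0}).toReal ≤
      ((s : ℝ) / t) * (μ {ω | W t ω = 0}).toReal :=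
  hitting_time_le_spitzer_general β hmeas hindep hident hval s W hW t ht
end

section
/- Let β be a random variable with P(β = 0) < 1, and let θ₀ > 0 satisfy E[e^{θ₀ β}] < ∞ and E[β e^{θ₀ β}] = 0. Then E[e^{θ₀ β}] < 1. -/
open MeasureTheory

lemma exp_le_aux (x : ℝ) : Real.exp x ≤ 1 + x * Real.exp x := by
  have h : 1 - x ≤ Real.exp (-x) := by
    have := Real.add_one_le_exp (-x); linarith
  have hp : (0:ℝ) < Real.exp x := Real.exp_pos x
  have := mul_le_mul_of_nonneg_right h hp.le
  rw [← Real.exp_add, neg_add_cancel, Real.exp_zero] at this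
  nlinarith

lemma exp_lt_aux {x : ℝ} (hx : x ≠ 0) : Real.exp x < 1 + x * Real.exp x := by
  have h : 1 - x < Real.exp (-x) := by
    have := Real.add_one_lt_exp (neg_ne_zero.mpr hx); linarith
  have hp : (0:ℝ) < Real.exp x := Real.exp_pos x
  have := mul_lt_mul_of_pos_right h hp
  rw [← Real.exp_add, neg_add_cancel, Real.exp_zero] at this
  nlinarith

/-- If `P(β = 0) < 1`, `θ₀ > 0`, `E[e^{θ₀ β}] < ∞` and `E[β e^{θ₀ β}] = 0`,
then `E[e^{θ₀ β}] < 1`. -/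
theorem mgf_lt_one_at_critical_tilt
    {Ω : Type*} [MeasurableSpace Ω] {μ : Measure Ω} [IsProbabilityMeasure μ]
    (β : Ω → ℝ) (hβ : Measurable β)
    (h0 : μ {ω | β ω = 0} < 1)
    (θ₀ : ℝ) (hθ₀ : 0 < θ₀)
    (hint : Integrable (fun ω => Real.exp (θ₀ * β ω)) μ)
    (hint' : Integrable (fun ω => β ω * Real.exp (θ₀ * β ω)) μ)
    (hcrit : ∫ ω, β ω * Real.exp (θ₀ * β ω) ∂μ = 0) :
    ∫ ω, Real.exp (θ₀ * β ω) ∂μ < 1 := by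
  set g : Ω → ℝ := fun ω => 1 + θ₀ * (β ω * Real.exp (θ₀ * β ω)) - Real.exp (θ₀ * β ω)
    with hg
  have hgint : Integrable g μ :=
    ((integrable_const 1).add (hint'.const_mul θ₀)).sub hint
  have hgnn : ∀ ω, 0 ≤ g ω := by
    intro ω
    have := exp_le_aux (θ₀ * β ω)
    simp only [hg]; nlinarith
  have hsupp : Function.support g = {ω | β ω ≠ 0} := by
    ext ω
    simp only [Function.mem_support, Set.mem_setOf_eq, hg]
    constructor
    · intro h hb
      apply h
      simp [hb]
    · intro hb
      have hne : θ₀ * β ω ≠ 0 := mul_ne_zero hθ₀.ne' hb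
      have := exp_lt_aux hne
      nlinarith
  have hpos : 0 < μ (Function.support g) := by
    rw [hsupp]
    by_contra h
    push_neg at h
    have hz : μ {ω | β ω ≠ 0} = 0 := le_antisymm h bot_le
    have : (μ Set.univ : ENNReal) ≤ μ {ω | β ω = 0} + μ {ω | β ω ≠ 0} := by
      refine le_trans (measure_mono ?_) (measure_union_le _ _)
      intro ω _
      by_cases hb : β ω = 0 <;> simp [hb]
    rw [hz, add_zero, measure_univ] at this
    exact absurd this h0.not_ge
  have hI : 0 < ∫ ω, g ω ∂μ := by
    rw [integral_pos_iff_support_of_nonneg hgnn hgint]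
    exact hpos
  have : ∫ ω, g ω ∂μ = 1 + θ₀ * ∫ ω, β ω * Real.exp (θ₀ * β ω) ∂μ
      - ∫ ω, Real.exp (θ₀ * β ω) ∂μ := by
    have h1 : ∫ ω, g ω ∂μ = (∫ ω, (1 + θ₀ * (β ω * Real.exp (θ₀ * β ω))) ∂μ)
        - ∫ ω, Real.exp (θ₀ * β ω) ∂μ :=
      integral_sub ((integrable_const 1).add (hint'.const_mul θ₀)) hint
    have h2 : ∫ ω, (1 + θ₀ * (β ω * Real.exp (θ₀ * β ω))) ∂μ
        = (∫ _ω, (1:ℝ) ∂μ) + ∫ ω, θ₀ * (β ω * Real.exp (θ₀ * β ω)) ∂μ :=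
      integral_add (integrable_const 1) (hint'.const_mul θ₀)
    rw [h1, h2, integral_const_mul]
    simp
  rw [this, hcrit] at hI
  linarith
end

section
/- Let X₁, …, X_n be independent and identically distributed real random variables with E[X₁] = 0, variance σ² = Var(X₁) > 0, and finite third absolute moment γ = E|X₁|³. Let φ(t) be the characteristic function of X₁. Then for every ε with 0 < ε ≤ σ²/(4γ), ∫_{−ε}^{ε} | φ(t)ⁿ − exp(−t² σ² n /2) | dt ≤ 144 γ / (σ⁴ n). -/
open MeasureTheory ProbabilityTheory Complex

/-!
Expanding `exp (i x)` to third order gives `‖φ t - (1 - σ² t² / 2)‖ ≤ γ |t|³`. On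
`|t| ≤ σ² / (4 γ)`, together with Lyapunov's inequality `σ³ ≤ γ`, this yields both
`‖φ t‖ ≤ exp (-σ² t² / 4)` and `‖φ t - exp (-σ² t² / 2)‖ ≤ (17/16) γ |t|³`. Telescoping
`aⁿ - bⁿ` then bounds the integrand by `2 n γ |t|³ exp (-n σ² t² / 8)`, and
`∫ |t|³ exp (-a t²) dt ≤ 1 / a²` gives `128 γ / (σ⁴ n)`.
-/

theorem norm_pow_sub_pow_le {R : Type*} [SeminormedRing R] [NormOneClass R] {a b : R} {M : ℝ}
    (ha : ‖a‖ ≤ M) (hb : ‖b‖ ≤ M) (n : ℕ) : ‖a ^ n - b ^ n‖ ≤ n * M ^ (n - 1) * ‖a - b‖ := by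
  have hM : 0 ≤ M := (norm_nonneg a).trans ha
  induction n with
  | zero => simp
  | succ n ih =>
    calc ‖a ^ (n + 1) - b ^ (n + 1)‖ = ‖a ^ n * (a - b) + (a ^ n - b ^ n) * b‖ := by
          noncomm_ring
      _ ≤ ‖a‖ ^ n * ‖a - b‖ + ‖a ^ n - b ^ n‖ * ‖b‖ :=
          (norm_add_le _ _).trans (add_le_add ((norm_mul_le _ _).trans
            (mul_le_mul_of_nonneg_right (norm_pow_le a n) (norm_nonneg _))) (norm_mul_le _ _))
      _ ≤ M ^ n * ‖a - b‖ + n * M ^ (n - 1) * ‖a - b‖ * M := by gcongr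
      _ = (n + 1 : ℕ) * M ^ n * ‖a - b‖ := by
          rcases n with _ | n
          · simp
          · push_cast; ring

theorem norm_sub_le_abs_pow_succ_of_norm_deriv_le {E : Type*} [NormedAddCommGroup E]
    [NormedSpace ℝ E] {f f' : ℝ → E} {k : ℕ} (hf : ∀ s, HasDerivAt f (f' s) s)
    (hf' : ∀ s, ‖f' s‖ ≤ |s| ^ k) (y : ℝ) : ‖f y - f 0‖ ≤ |y| ^ (k + 1) := by
  have hmem : ∀ s ∈ Set.Icc (-|y|) |y|, |s| ≤ |y| := fun s hs => abs_le.2 hs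
  have := (convex_Icc (-|y|) |y|).norm_image_sub_le_of_norm_hasDerivWithin_le
    (fun s _ => (hf s).hasDerivWithinAt)
    (fun s hs => (hf' s).trans (pow_le_pow_left₀ (abs_nonneg s) (hmem s hs) k))
    (x := 0) (y := y) (by simp) (by simp [neg_abs_le, le_abs_self])
  simpa [pow_succ] using this

theorem hasDerivAt_cexp_I_mul_ofReal (x : ℝ) :
    HasDerivAt (fun s : ℝ => cexp (I * s)) (I * cexp (I * x)) x := by
  simpa [mul_comm] using ((hasDerivAt_id (x : ℂ)).const_mul I).cexp.comp_ofReal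

theorem norm_cexp_I_mul_ofReal_sub_one_sub_le (x : ℝ) :
    ‖cexp (I * x) - 1 - I * x‖ ≤ |x| ^ 2 := by
  have := norm_sub_le_abs_pow_succ_of_norm_deriv_le (k := 1)
    (f := fun s : ℝ => cexp (I * s) - 1 - I * s) (f' := fun s => I * (cexp (I * s) - 1))
    (fun s => (((hasDerivAt_cexp_I_mul_ofReal s).sub_const 1).sub
        ((hasDerivAt_id (s : ℂ)).comp_ofReal.const_mul I)).congr_deriv (by ring))
    (fun s => by simpa using Real.norm_exp_I_mul_ofReal_sub_one_le (x := s)) x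
  simpa using this

theorem norm_cexp_I_mul_ofReal_sub_one_sub_add_le (x : ℝ) :
    ‖cexp (I * x) - 1 - I * x + x ^ 2 / 2‖ ≤ |x| ^ 3 := by
  have := norm_sub_le_abs_pow_succ_of_norm_deriv_le (k := 2)
    (f := fun s : ℝ => cexp (I * s) - 1 - I * s + (s : ℂ) ^ 2 / 2)
    (f' := fun s => I * (cexp (I * s) - 1 - I * s))
    (fun s => ((((hasDerivAt_cexp_I_mul_ofReal s).sub_const 1).sub
        ((hasDerivAt_id (s : ℂ)).comp_ofReal.const_mul I)).add
        (((hasDerivAt_pow 2 (s : ℂ)).comp_ofReal).div_const 2)).congr_deriv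
          (by linear_combination (s : ℂ) * I_mul_I))
    (fun s => by simpa using norm_cexp_I_mul_ofReal_sub_one_sub_le s) x
  simpa using this

section Moments

variable {Ω : Type*} [MeasurableSpace Ω] {μ : Measure Ω} [IsProbabilityMeasure μ] {X : Ω → ℝ}

theorem integrable_pow_of_integrable_abs_pow_three (hX : AEStronglyMeasurable X μ)
    (h3 : Integrable (fun ω => |X ω| ^ 3) μ) {p : ℕ} (hp : p ≤ 3) :
    Integrable (fun ω => X ω ^ p) μ := by
  refine (integrable_norm_iff (hX.pow p)).1 ?_
  simpa [norm_pow] using integrable_norm_pow_of_le hX hp (by simpa using h3)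

theorem pow_three_le_integral_abs_pow_three (hX : AEStronglyMeasurable X μ)
    (h3 : Integrable (fun ω => |X ω| ^ 3) μ) {σ : ℝ} (hσ : 0 ≤ σ)
    (hσX : σ ^ 2 = ∫ ω, X ω ^ 2 ∂μ) : σ ^ 3 ≤ ∫ ω, |X ω| ^ 3 ∂μ := by
  have h2 := integrable_pow_of_integrable_abs_pow_three hX h3 (p := 2) (by norm_num)
  -- AM-GM for `a³, a³, σ³`
  have hpt : ∀ ω, 3 * σ * X ω ^ 2 ≤ 2 * |X ω| ^ 3 + σ ^ 3 := fun ω => by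
    rw [← sq_abs]
    nlinarith [mul_nonneg (sq_nonneg (|X ω| - σ)) (by positivity : 0 ≤ 2 * |X ω| + σ)]
  have := calc 3 * σ ^ 3 = ∫ ω, 3 * σ * X ω ^ 2 ∂μ := by rw [integral_const_mul, ← hσX]; ring
    _ ≤ ∫ ω, (2 * |X ω| ^ 3 + σ ^ 3) ∂μ :=
      integral_mono (h2.const_mul _) ((h3.const_mul 2).add (integrable_const _)) hpt
    _ = 2 * (∫ ω, |X ω| ^ 3 ∂μ) + σ ^ 3 := by
      rw [integral_add (h3.const_mul 2) (integrable_const _), integral_const_mul]; simp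
  linarith

theorem norm_integral_cexp_I_mul_sub_le (hX : AEStronglyMeasurable X μ)
    (hmean : ∫ ω, X ω ∂μ = 0) (h3 : Integrable (fun ω => |X ω| ^ 3) μ) (t : ℝ) :
    ‖∫ ω, cexp (I * (t * X ω)) ∂μ - (1 - t ^ 2 * (∫ ω, X ω ^ 2 ∂μ) / 2 : ℝ)‖ ≤
      |t| ^ 3 * ∫ ω, |X ω| ^ 3 ∂μ := by
  have h1 : Integrable X μ := by
    simpa using integrable_pow_of_integrable_abs_pow_three hX h3 (p := 1) (by norm_num)
  have h2 := integrable_pow_of_integrable_abs_pow_three hX h3 (p := 2) (by norm_num)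
  set R : Ω → ℂ := fun ω => cexp (I * (t * X ω)) - 1 - I * (t * X ω) + (t * X ω : ℂ) ^ 2 / 2
  have hR : ∀ ω, ‖R ω‖ ≤ |t| ^ 3 * |X ω| ^ 3 := fun ω => by
    simpa [R, abs_mul, mul_pow] using norm_cexp_I_mul_ofReal_sub_one_sub_add_le (t * X ω)
  have hintR : ∫ ω, R ω ∂μ =
      ∫ ω, cexp (I * (t * X ω)) ∂μ - (1 - t ^ 2 * (∫ ω, X ω ^ 2 ∂μ) / 2 : ℝ) := by
    have hE : Integrable (fun ω => cexp (I * (t * X ω))) μ :=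
      .of_bound (by fun_prop) 1
        (.of_forall fun ω => by simpa using (norm_exp_I_mul_ofReal (t * X ω)).le)
    have hL : Integrable (fun ω => I * (t * X ω : ℂ)) μ :=
      (h1.ofReal.const_mul (t : ℂ)).const_mul I
    have hQ : Integrable (fun ω => (t * X ω : ℂ) ^ 2 / 2) μ := by
      simpa [mul_pow] using (h2.ofReal.const_mul ((t : ℂ) ^ 2)).div_const 2
    have hE1 : Integrable (fun ω => cexp (I * (t * X ω)) - 1) μ := hE.sub (integrable_const 1)
    have hEL : Integrable (fun ω => cexp (I * (t * X ω)) - 1 - I * (t * X ω)) μ := hE1.sub hL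
    rw [integral_add hEL hQ, integral_sub hE1 hL, integral_sub hE (integrable_const 1)]
    simp only [integral_const, probReal_univ, one_smul, integral_const_mul,
      integral_complex_ofReal, hmean, ofReal_zero, mul_zero, sub_zero, mul_pow, ← ofReal_pow,
      integral_div, ofReal_sub, ofReal_one, ofReal_div, ofReal_mul, ofReal_ofNat]
    ring
  rw [← hintR, ← integral_const_mul]
  exact norm_integral_le_of_norm_le (h3.const_mul _) (.of_forall hR)

end Moments

theorem norm_pow_sub_exp_le {z : ℂ} {u δ : ℝ} (n : ℕ) (hu : 0 ≤ u)
    (hz : ‖z - (1 - u / 2 : ℝ)‖ ≤ δ) (hδ : δ ≤ u / 4) (hu2 : u ^ 2 ≤ δ / 4) :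
    ‖z ^ n - (Real.exp (-(u / 2)) : ℂ) ^ n‖ ≤ 2 * n * δ * Real.exp (-(n * u / 8)) := by
  have hu1 : u ≤ 1 / 16 := by nlinarith
  have hz' : ‖z‖ ≤ Real.exp (-(u / 4)) := calc
    ‖z‖ ≤ ‖((1 - u / 2 : ℝ) : ℂ)‖ + δ := norm_le_norm_add_norm_sub' z _ |>.trans (by gcongr)
    _ = 1 - u / 2 + δ := by rw [norm_real, Real.norm_of_nonneg (by linarith)]
    _ ≤ -(u / 4) + 1 := by linarith
    _ ≤ Real.exp (-(u / 4)) := Real.add_one_le_exp _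
  have hg : ‖(Real.exp (-(u / 2)) : ℂ)‖ ≤ Real.exp (-(u / 4)) := by
    rw [norm_real, Real.norm_of_nonneg (Real.exp_pos _).le]
    gcongr; linarith
  have hzg : ‖z - Real.exp (-(u / 2))‖ ≤ 17 / 16 * δ := calc
    ‖z - Real.exp (-(u / 2))‖ ≤
        ‖z - (1 - u / 2 : ℝ)‖ + ‖((1 - u / 2 - Real.exp (-(u / 2)) : ℝ) : ℂ)‖ := by
        rw [← sub_add_sub_cancel z ((1 - u / 2 : ℝ) : ℂ)]; push_cast; exact norm_add_le _ _
    _ ≤ δ + u ^ 2 / 4 := by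
        gcongr
        rw [norm_real, Real.norm_eq_abs, abs_sub_comm]
        calc |Real.exp (-(u / 2)) - (1 - u / 2)| = |Real.exp (-(u / 2)) - 1 - -(u / 2)| := by
              ring_nf
          _ ≤ (-(u / 2)) ^ 2 :=
              Real.abs_exp_sub_one_sub_id_le (abs_le.2 ⟨by linarith, by linarith⟩)
          _ = u ^ 2 / 4 := by ring
    _ ≤ 17 / 16 * δ := by linarith
  have hpow : Real.exp (-(u / 4)) ^ (n - 1) ≤ 32 / 17 * Real.exp (-(n * u / 8)) := by
    rcases n with _ | n
    · norm_num
    · have hexp : Real.exp (u / 8) ≤ 32 / 17 := calc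
        Real.exp (u / 8) ≤ 1 / (1 - u / 8) :=
          Real.exp_bound_div_one_sub_of_interval (by positivity) (by linarith)
        _ ≤ 32 / 17 := by rw [div_le_div_iff₀ (by linarith) (by norm_num)]; linarith
      calc Real.exp (-(u / 4)) ^ (n + 1 - 1) = Real.exp (-(n * u / 4)) := by
            rw [Nat.add_sub_cancel, ← Real.exp_nat_mul]; ring_nf
        _ ≤ Real.exp (u / 8) * Real.exp (-((n + 1 : ℕ) * u / 8)) := by
            rw [← Real.exp_add]; gcongr; push_cast; nlinarith [(Nat.cast_nonneg n : (0:ℝ) ≤ n)]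
        _ ≤ 32 / 17 * Real.exp (-((n + 1 : ℕ) * u / 8)) := by gcongr
  calc ‖z ^ n - (Real.exp (-(u / 2)) : ℂ) ^ n‖
      ≤ n * Real.exp (-(u / 4)) ^ (n - 1) * ‖z - Real.exp (-(u / 2))‖ :=
        norm_pow_sub_pow_le hz' hg n
    _ ≤ n * (32 / 17 * Real.exp (-(n * u / 8))) * (17 / 16 * δ) := by gcongr
    _ = 2 * n * δ * Real.exp (-(n * u / 8)) := by ring

theorem norm_pow_sub_gaussian_le {z : ℂ} {σ γ t : ℝ} (n : ℕ) (hσ : 0 ≤ σ) (hσγ : σ ^ 3 ≤ γ)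
    (ht : 4 * γ * |t| ≤ σ ^ 2) (hz : ‖z - (1 - t ^ 2 * σ ^ 2 / 2 : ℝ)‖ ≤ γ * |t| ^ 3) :
    ‖z ^ n - Real.exp (-(t ^ 2 * σ ^ 2 * n) / 2)‖ ≤
      2 * n * γ * (|t| ^ 3 * Real.exp (-(n * σ ^ 2 / 8) * t ^ 2)) := by
  have hγ : 0 ≤ γ := (pow_nonneg hσ 3).trans hσγ
  have ht3 : |t| ^ 3 = |t| * t ^ 2 := by rw [← sq_abs]; ring
  have hσt : 4 * σ ^ 4 * |t| ≤ γ := by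
    rcases hγ.eq_or_lt with rfl | hγ
    · have : σ = 0 := pow_eq_zero_iff three_ne_zero |>.1 (le_antisymm hσγ (pow_nonneg hσ 3))
      simp [this]
    · refine le_of_mul_le_mul_left ?_ hγ
      calc γ * (4 * σ ^ 4 * |t|) = σ ^ 4 * (4 * γ * |t|) := by ring
        _ ≤ σ ^ 4 * σ ^ 2 := by gcongr
        _ = (σ ^ 3) ^ 2 := by ring
        _ ≤ γ * γ := by rw [← sq]; gcongr
  have := norm_pow_sub_exp_le n (by positivity) hz
    (by rw [ht3]; nlinarith [mul_le_mul_of_nonneg_right ht (sq_nonneg t)])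
    (calc (t ^ 2 * σ ^ 2) ^ 2 = 4 * σ ^ 4 * |t| * |t| ^ 3 / 4 := by
            rw [ht3]; linear_combination (-(σ ^ 4 * t ^ 2)) * abs_mul_abs_self t
      _ ≤ γ * |t| ^ 3 / 4 := by gcongr)
  have hexp : ((Real.exp (-(t ^ 2 * σ ^ 2 * n) / 2) : ℝ) : ℂ) =
      (Real.exp (-(t ^ 2 * σ ^ 2 / 2)) : ℂ) ^ n := by
    rw [← ofReal_pow, ← Real.exp_nat_mul]; ring_nf
  rw [hexp]
  exact this.trans_eq (by ring_nf)

theorem hasDerivAt_mul_exp_neg_mul_sq {a : ℝ} (ha : a ≠ 0) (t : ℝ) :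
    HasDerivAt (fun t => (a * t ^ 2 + 1) / (2 * a ^ 2) * Real.exp (-a * t ^ 2))
      (-(t ^ 3 * Real.exp (-a * t ^ 2))) t := by
  refine ((((hasDerivAt_pow 2 t).const_mul a).add_const 1).div_const (2 * a ^ 2) |>.mul
    ((hasDerivAt_pow 2 t).const_mul (-a)).exp).congr_deriv ?_
  field_simp
  ring

theorem integral_abs_pow_three_mul_exp_neg_mul_sq_le {a ε : ℝ} (ha : 0 < a) (hε : 0 ≤ ε) :
    ∫ t in (-ε)..ε, |t| ^ 3 * Real.exp (-a * t ^ 2) ≤ 1 / a ^ 2 := by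
  set g := fun t : ℝ => |t| ^ 3 * Real.exp (-a * t ^ 2)
  have hg : Continuous g := by fun_prop
  have half : ∫ t in (0)..ε, g t ≤ 1 / (2 * a ^ 2) := calc
    ∫ t in (0)..ε, g t = -∫ t in (0)..ε, -(t ^ 3 * Real.exp (-a * t ^ 2)) := by
      rw [intervalIntegral.integral_neg, neg_neg]
      refine intervalIntegral.integral_congr fun t ht => ?_
      rw [Set.uIcc_of_le hε] at ht
      simp [g, abs_of_nonneg ht.1]
    _ = 1 / (2 * a ^ 2) - (a * ε ^ 2 + 1) / (2 * a ^ 2) * Real.exp (-a * ε ^ 2) := by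
      rw [intervalIntegral.integral_eq_sub_of_hasDerivAt
        (fun t _ => hasDerivAt_mul_exp_neg_mul_sq ha.ne' t)
        (Continuous.intervalIntegrable (by fun_prop) _ _)]
      simp
    _ ≤ 1 / (2 * a ^ 2) := by
      have : 0 ≤ (a * ε ^ 2 + 1) / (2 * a ^ 2) * Real.exp (-a * ε ^ 2) := by positivity
      linarith
  have hsymm : ∫ t in (-ε)..0, g t = ∫ t in (0)..ε, g t := by
    rw [← neg_zero, ← intervalIntegral.integral_comp_neg]; simp [g]
  rw [← intervalIntegral.integral_add_adjacent_intervals (hg.intervalIntegrable _ 0)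
    (hg.intervalIntegrable 0 _), hsymm]
  linarith [half, show 1 / (2 * a ^ 2) + 1 / (2 * a ^ 2) = 1 / a ^ 2 by ring]

theorem intervalIntegral_le_div_sq_of_le_abs_pow_three_mul_exp {f : ℝ → ℝ} {C a ε : ℝ}
    (hC : 0 ≤ C) (ha : 0 < a) (hε : 0 ≤ ε)
    (hf : ∀ t ∈ Set.Icc (-ε) ε, f t ≤ C * (|t| ^ 3 * Real.exp (-a * t ^ 2))) :
    ∫ t in (-ε)..ε, f t ≤ C / a ^ 2 := by
  by_cases hfi : IntervalIntegrable f volume (-ε) ε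
  · calc ∫ t in (-ε)..ε, f t ≤ ∫ t in (-ε)..ε, C * (|t| ^ 3 * Real.exp (-a * t ^ 2)) :=
          intervalIntegral.integral_mono_on (by linarith) hfi
            (Continuous.intervalIntegrable (by fun_prop) _ _) hf
      _ = C * ∫ t in (-ε)..ε, |t| ^ 3 * Real.exp (-a * t ^ 2) :=
          intervalIntegral.integral_const_mul _ _
      _ ≤ C * (1 / a ^ 2) := by gcongr; exact integral_abs_pow_three_mul_exp_neg_mul_sq_le ha hε
      _ = C / a ^ 2 := by ring
  · rw [intervalIntegral.integral_undef hfi]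
    positivity

theorem char_fun_central_integral_bound_general
    {Ω : Type*} [MeasurableSpace Ω] {μ : Measure Ω} [IsProbabilityMeasure μ]
    (n : ℕ) (hn : 0 < n) (X : Fin n → Ω → ℝ) (hmeas : ∀ i, Measurable (X i))
    (hmean : ∫ ω, X ⟨0, hn⟩ ω ∂μ = 0)
    (σ γ : ℝ) (hσpos : 0 < σ) (hσ : σ ^ 2 = variance (X ⟨0, hn⟩) μ)
    (hγint : Integrable (fun ω => |X ⟨0, hn⟩ ω| ^ 3) μ)
    (hγ : γ = ∫ ω, |X ⟨0, hn⟩ ω| ^ 3 ∂μ)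
    (φ : ℝ → ℂ)
    (hφ : ∀ t : ℝ, φ t = ∫ ω, Complex.exp (Complex.I * (t * X ⟨0, hn⟩ ω)) ∂μ)
    (ε : ℝ) (hε : 0 < ε) (hεle : ε ≤ σ ^ 2 / (4 * γ)) :
    (∫ t in (-ε)..ε,
        ‖φ t ^ n - Real.exp (-(t ^ 2 * σ ^ 2 * n) / 2)‖) ≤
      144 * γ / (σ ^ 4 * n) := by
  have hX : AEStronglyMeasurable (X ⟨0, hn⟩) μ := (hmeas _).aestronglyMeasurable
  have hσ₂ : σ ^ 2 = ∫ ω, X ⟨0, hn⟩ ω ^ 2 ∂μ :=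
    hσ.trans (variance_of_integral_eq_zero hX.aemeasurable hmean)
  have hσγ : σ ^ 3 ≤ γ := hγ ▸ pow_three_le_integral_abs_pow_three hX hγint hσpos.le hσ₂
  have hγpos : 0 < γ := (pow_pos hσpos 3).trans_le hσγ
  have hbound : ∀ t ∈ Set.Icc (-ε) ε, ‖φ t ^ n - Real.exp (-(t ^ 2 * σ ^ 2 * n) / 2)‖ ≤
      2 * n * γ * (|t| ^ 3 * Real.exp (-(n * σ ^ 2 / 8) * t ^ 2)) := fun t ht => by
    refine norm_pow_sub_gaussian_le n hσpos.le hσγ ?_ ?_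
    · have := (le_div_iff₀ (by positivity)).1 hεle
      nlinarith [abs_le.2 ht]
    · rw [hφ t, hγ, hσ₂, mul_comm _ (|t| ^ 3)]
      exact norm_integral_cexp_I_mul_sub_le hX hmean hγint t
  calc _ ≤ 2 * n * γ / (n * σ ^ 2 / 8) ^ 2 :=
        intervalIntegral_le_div_sq_of_le_abs_pow_three_mul_exp (by positivity) (by positivity)
          hε.le hbound
    _ = 128 * γ / (σ ^ 4 * n) := by field_simp; ring
    _ ≤ 144 * γ / (σ ^ 4 * n) := by gcongr; norm_num

/-- For iid centered random variables `X₁,…,X_n` with variance `σ² > 0` and third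
absolute moment `γ`, with `φ` the characteristic function of `X₁`, for every
`0 < ε ≤ σ²/(4γ)`, `∫_{-ε}^{ε} |φ(t)ⁿ - e^{-t²σ²n/2}| dt ≤ 144γ/(σ⁴n)`. -/
theorem char_fun_central_integral_bound
    {Ω : Type*} [MeasurableSpace Ω] {μ : Measure Ω} [IsProbabilityMeasure μ]
    (n : ℕ) (hn : 0 < n) (X : Fin n → Ω → ℝ) (hmeas : ∀ i, Measurable (X i))
    (hindep : iIndepFun X μ)
    (hident : ∀ i, IdentDistrib (X i) (X ⟨0, hn⟩) μ μ)
    (hmean : ∫ ω, X ⟨0, hn⟩ ω ∂μ = 0)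
    (σ γ : ℝ) (hσpos : 0 < σ) (hσ : σ ^ 2 = variance (X ⟨0, hn⟩) μ)
    (hγint : Integrable (fun ω => |X ⟨0, hn⟩ ω| ^ 3) μ)
    (hγ : γ = ∫ ω, |X ⟨0, hn⟩ ω| ^ 3 ∂μ)
    (φ : ℝ → ℂ)
    (hφ : ∀ t : ℝ, φ t = ∫ ω, Complex.exp (Complex.I * (t * X ⟨0, hn⟩ ω)) ∂μ)
    (ε : ℝ) (hε : 0 < ε) (hεle : ε ≤ σ ^ 2 / (4 * γ)) :
    (∫ t in (-ε)..ε,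
        ‖φ t ^ n - Real.exp (-(t ^ 2 * σ ^ 2 * n) / 2)‖) ≤
      144 * γ / (σ ^ 4 * n) :=
  char_fun_central_integral_bound_general n hn X hmeas hmean σ γ hσpos hσ hγint hγ φ hφ ε hε hεle
end
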